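/- Let X be a continuous random variable on [-1,1] whose density f_X has an absolutely convergent Chebyshev series f_X(x) = ∑_{l=0}^∞ μ_l T_l(x). Then as k → ∞, T_k(X) converges in distribution to the random variable Γ with density f_Γ(z) = 1/(π√(1-z²)) on (-1,1). -/

import Mathlib

open Real MeasureTheory Set Filter Polynomial Topology

/-!
Substituting `x = cos θ` turns `P(T_k X ≤ z)` into `∫₀^π 1{cos kθ ≤ z} f(cos θ) sin θ dθ`, and the
arcsine law into the uniform law on `(0, π)`, so its cdf at `z` is the mean of the `2π`-periodic
function `1{cos u ≤ z}`; the Chebyshev series of `f` becomes the cosine series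
`f(cos θ) sin θ = ∑ μ_l cos(lθ) sin θ`. For a `C¹` weight `φ` and a bounded periodic `g`,
`∫ g(kθ) φ(θ) dθ` tends to the mean of `g` times `∫ φ`: integrating by parts against the primitive
of `g` minus its mean, which is periodic and hence bounded, leaves an error `O(1/k)`. Dominated
convergence over `l`, with `∑ |μ_l| < ∞`, carries this over to the series.
-/

noncomputable def arcsineDensity : ℝ → ENNReal :=
  Set.indicator (Set.Ioo (-1 : ℝ) 1)
    (fun z => ENNReal.ofReal (1 / (π * Real.sqrt (1 - z ^ 2))))

section PeriodicAveraging

variable {g : ℝ → ℝ} {T C : ℝ}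

lemma intervalIntegrable_of_abs_le (hgm : Measurable g) (hgC : ∀ u, |g u| ≤ C) (a b : ℝ) :
    IntervalIntegrable g volume a b :=
  intervalIntegrable_const.mono_fun' hgm.aestronglyMeasurable (ae_of_all _ hgC)

lemma intervalIntegrable_comp_mul_mul_of_abs_le (hgm : Measurable g) (hgC : ∀ u, |g u| ≤ C)
    {φ : ℝ → ℝ} (hφ : Continuous φ) (c a b : ℝ) :
    IntervalIntegrable (fun θ => g (c * θ) * φ θ) volume a b :=
  (intervalIntegrable_of_abs_le (hgm.comp (measurable_const_mul c)) (fun θ => hgC (c * θ))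
    a b).mul_continuousOn hφ.continuousOn

lemma integral_comp_mul_mul_eq_of_hasDerivAt_off_countable {Φ : ℝ → ℝ} {s : Set ℝ}
    (hs : s.Countable) (hΦ : Continuous Φ) (hΦg : ∀ u ∉ s, HasDerivAt Φ (g u) u)
    (hgm : Measurable g) (hgC : ∀ u, |g u| ≤ C) {φ φ' : ℝ → ℝ}
    (hφ : ∀ θ, HasDerivAt φ (φ' θ) θ) (hφ' : Continuous φ') {c : ℝ} (hc : c ≠ 0) (a b : ℝ) :
    ∫ θ in a..b, g (c * θ) * φ θ =
      c⁻¹ * (Φ (c * b) * φ b - Φ (c * a) * φ a - ∫ θ in a..b, Φ (c * θ) * φ' θ) := by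
  have hφc : Continuous φ := continuous_iff_continuousAt.2 fun θ => (hφ θ).continuousAt
  have hint₁ := intervalIntegrable_comp_mul_mul_of_abs_le hgm hgC hφc c a b
  have hint₂ : IntervalIntegrable (fun θ => Φ (c * θ) * φ' θ) volume a b :=
    ((hΦ.comp (continuous_const_mul c)).mul hφ').intervalIntegrable a b
  have hderiv : ∀ θ ∈ Ioo (min a b) (max a b) \ (fun θ => c * θ) ⁻¹' s,
      HasDerivAt (fun θ => c⁻¹ * (Φ (c * θ) * φ θ))
        (g (c * θ) * φ θ + c⁻¹ * (Φ (c * θ) * φ' θ)) θ := by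
    rintro θ ⟨-, hθ⟩
    have hΦc : HasDerivAt (fun θ => Φ (c * θ)) (g (c * θ) * c) θ :=
      (hΦg _ hθ).comp θ (by simpa using (hasDerivAt_id θ).const_mul c)
    refine ((hΦc.mul (hφ θ)).const_mul c⁻¹).congr_deriv ?_
    field_simp
  have hftc := integral_eq_of_hasDerivAt_off_countable (fun θ => c⁻¹ * (Φ (c * θ) * φ θ)) _
    (hs.preimage (mul_right_injective₀ hc))
    (((hΦ.comp (continuous_const_mul c)).mul hφc).const_mul c⁻¹).continuousOn hderiv
    (hint₁.add (hint₂.const_mul c⁻¹))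
  rw [intervalIntegral.integral_add hint₁ (hint₂.const_mul c⁻¹),
    intervalIntegral.integral_const_mul] at hftc
  linear_combination hftc

lemma Function.Periodic.periodic_primitive_sub_mean (hg : Periodic g T) (hT : T ≠ 0)
    (hgi : ∀ a b, IntervalIntegrable g volume a b) :
    Periodic (fun u => ∫ t in 0..u, (g t - T⁻¹ * ∫ s in 0..T, g s)) T := by
  intro u
  have hgi' : ∀ a b, IntervalIntegrable (fun t => g t - T⁻¹ * ∫ s in 0..T, g s) volume a b :=
    fun a b => (hgi a b).sub intervalIntegrable_const
  have hperiod : ∫ t in u..u + T, (g t - T⁻¹ * ∫ s in 0..T, g s) = 0 := by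
    rw [intervalIntegral.integral_sub (hgi _ _) intervalIntegrable_const,
      hg.intervalIntegral_add_eq u 0, zero_add, intervalIntegral.integral_const, smul_eq_mul,
      add_sub_cancel_left, mul_inv_cancel_left₀ hT, sub_self]
  simp only
  rw [← intervalIntegral.integral_add_adjacent_intervals (hgi' 0 u) (hgi' u (u + T)), hperiod,
    add_zero]

theorem Function.Periodic.tendsto_integral_comp_mul_mul (hg : Periodic g T) (hT : T ≠ 0)
    (hgm : Measurable g) (hgC : ∀ u, |g u| ≤ C) {s : Set ℝ} (hs : s.Countable)
    (hgc : ∀ u ∉ s, ContinuousAt g u) {φ : ℝ → ℝ} (hφ : ContDiff ℝ 1 φ) (a b : ℝ) :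
    Tendsto (fun c => ∫ θ in a..b, g (c * θ) * φ θ) atTop
      (𝓝 ((T⁻¹ * ∫ u in 0..T, g u) * ∫ θ in a..b, φ θ)) := by
  set m := T⁻¹ * ∫ u in 0..T, g u
  set Φ := fun u => ∫ t in 0..u, (g t - m)
  have hgm' : Measurable fun u => g u - m := hgm.sub_const m
  have hgC' : ∀ u, |g u - m| ≤ C + |m| := fun u => (abs_sub _ _).trans (by gcongr; exact hgC u)
  have hΦc : Continuous Φ := intervalIntegral.continuous_primitive
    (intervalIntegrable_of_abs_le hgm' hgC') 0
  obtain ⟨B, hB⟩ := isBounded_iff_forall_norm_le.1 <|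
    (hg.periodic_primitive_sub_mean hT (intervalIntegrable_of_abs_le hgm hgC))
      |>.isBounded_of_continuous hT hΦc
  have hΦ' : ∀ u ∉ s, HasDerivAt Φ (g u - m) u := fun u hu =>
    intervalIntegral.integral_hasDerivAt_right (intervalIntegrable_of_abs_le hgm' hgC' 0 u)
      hgm'.stronglyMeasurable.stronglyMeasurableAtFilter ((hgc u hu).sub continuousAt_const)
  obtain ⟨K, hK⟩ := (isCompact_uIcc (a := a) (b := b)).exists_bound_of_continuousOn
    (hφ.continuous_deriv le_rfl).continuousOn
  have hφd : ∀ θ, HasDerivAt φ (deriv φ θ) θ := fun θ =>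
    ((hφ.differentiable one_ne_zero) θ).hasDerivAt
  have hφi : IntervalIntegrable φ volume a b := hφ.continuous.intervalIntegrable a b
  have hbound : ∀ c > 0, ‖(∫ θ in a..b, g (c * θ) * φ θ) - m * ∫ θ in a..b, φ θ‖ ≤
      (B * |φ b| + B * |φ a| + B * K * |b - a|) / c := by
    intro c hc
    have hibp := integral_comp_mul_mul_eq_of_hasDerivAt_off_countable hs hΦc hΦ' hgm' hgC' hφd
      (hφ.continuous_deriv le_rfl) hc.ne' a b
    have hsplit : ∫ θ in a..b, (g (c * θ) - m) * φ θ =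
        (∫ θ in a..b, g (c * θ) * φ θ) - m * ∫ θ in a..b, φ θ := by
      simp only [sub_mul]
      rw [intervalIntegral.integral_sub
        (intervalIntegrable_comp_mul_mul_of_abs_le hgm hgC hφ.continuous c a b)
        (hφi.const_mul m), intervalIntegral.integral_const_mul]
    have hΦB : ∀ u, |Φ u| ≤ B := fun u => hB _ (mem_range_self u)
    have hrest : ‖∫ θ in a..b, Φ (c * θ) * deriv φ θ‖ ≤ B * K * |b - a| :=
      intervalIntegral.norm_integral_le_of_norm_le_const fun θ hθ => by
        rw [norm_mul]
        exact mul_le_mul (hΦB _) (hK θ (uIoc_subset_uIcc hθ)) (norm_nonneg _)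
          ((abs_nonneg _).trans (hΦB 0))
    rw [← hsplit, hibp, norm_mul, norm_inv, Real.norm_of_nonneg hc.le, inv_mul_eq_div]
    gcongr
    refine (norm_sub_le _ _).trans (add_le_add ((norm_sub_le _ _).trans ?_) hrest)
    simp only [norm_mul, Real.norm_eq_abs]
    gcongr <;> exact hΦB _
  refine tendsto_sub_nhds_zero_iff.1 (squeeze_zero_norm' ?_
    ((tendsto_const_nhds (x := B * |φ b| + B * |φ a| + B * K * |b - a|)).div_atTop tendsto_id))
  filter_upwards [eventually_gt_atTop 0] with c hc using hbound c hc

lemma hasSum_intervalIntegral_mul_of_summable_abs {μ : ℕ → ℝ} (hμ : Summable fun l => |μ l|)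
    {ψ : ℕ → ℝ → ℝ} (hψ : ∀ l, Continuous (ψ l)) (hψ1 : ∀ l θ, |ψ l θ| ≤ 1) {F : ℝ → ℝ}
    (hF : ∀ θ, HasSum (fun l => μ l * ψ l θ) (F θ)) (hgm : Measurable g) (hgC : ∀ u, |g u| ≤ C)
    (a b : ℝ) :
    HasSum (fun l => μ l * ∫ θ in a..b, g θ * ψ l θ) (∫ θ in a..b, g θ * F θ) := by
  simp_rw [← intervalIntegral.integral_const_mul]
  refine intervalIntegral.hasSum_integral_of_dominated_convergence (fun l _ => |μ l| * C)
    (fun l => (measurable_const.mul (hgm.mul (hψ l).measurable)).aestronglyMeasurable)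
    (fun l => ae_of_all _ fun θ _ => ?_) (ae_of_all _ fun _ _ => hμ.mul_right C)
    intervalIntegrable_const (ae_of_all _ fun θ _ => ?_)
  · rw [Real.norm_eq_abs, abs_mul, abs_mul]
    gcongr
    simpa using mul_le_mul (hgC θ) (hψ1 l θ) (abs_nonneg _) ((abs_nonneg _).trans (hgC θ))
  · simpa only [mul_left_comm] using (hF θ).mul_left (g θ)

theorem Function.Periodic.tendsto_integral_comp_mul_mul_of_hasSum (hg : Periodic g T)
    (hT : T ≠ 0) (hgm : Measurable g) (hgC : ∀ u, |g u| ≤ C) {s : Set ℝ} (hs : s.Countable)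
    (hgc : ∀ u ∉ s, ContinuousAt g u) {μ : ℕ → ℝ} (hμ : Summable fun l => |μ l|)
    {ψ : ℕ → ℝ → ℝ} (hψ : ∀ l, ContDiff ℝ 1 (ψ l)) (hψ1 : ∀ l θ, |ψ l θ| ≤ 1) {F : ℝ → ℝ}
    (hF : ∀ θ, HasSum (fun l => μ l * ψ l θ) (F θ)) (a b : ℝ) :
    Tendsto (fun k : ℕ => ∫ θ in a..b, g (k * θ) * F θ) atTop
      (𝓝 ((T⁻¹ * ∫ u in 0..T, g u) * ∫ θ in a..b, F θ)) := by
  have hψc : ∀ l, Continuous (ψ l) := fun l => (hψ l).continuous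
  have hsum : ∀ k : ℕ, HasSum (fun l => μ l * ∫ θ in a..b, g (k * θ) * ψ l θ)
      (∫ θ in a..b, g (k * θ) * F θ) := fun k =>
    hasSum_intervalIntegral_mul_of_summable_abs hμ hψc hψ1 hF
      (hgm.comp (measurable_const_mul _)) (fun θ => hgC _) a b
  have hsum₁ : HasSum (fun l => μ l * ∫ θ in a..b, ψ l θ) (∫ θ in a..b, F θ) := by
    simpa using hasSum_intervalIntegral_mul_of_summable_abs hμ hψc hψ1 hF measurable_const
      (fun _ => abs_one.le) a b
  have hbound : ∀ (k : ℕ) l, ‖μ l * ∫ θ in a..b, g (k * θ) * ψ l θ‖ ≤ |μ l| * (C * |b - a|) := by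
    intro k l
    rw [norm_mul, Real.norm_eq_abs]
    gcongr
    refine intervalIntegral.norm_integral_le_of_norm_le_const fun θ _ => ?_
    simpa using mul_le_mul (hgC (k * θ)) (hψ1 l θ) (abs_nonneg _) ((abs_nonneg _).trans (hgC 0))
  have hlim := tendsto_tsum_of_dominated_convergence (hμ.mul_right (C * |b - a|))
    (fun l => ((hg.tendsto_integral_comp_mul_mul hT hgm hgC hs hgc (hψ l) a b).comp
      tendsto_natCast_atTop_atTop).const_mul (μ l)) (Eventually.of_forall hbound)
  convert hlim.congr fun k => (hsum k).tsum_eq using 2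
  rw [← hsum₁.tsum_eq, ← tsum_mul_left]
  exact tsum_congr fun l => mul_left_comm _ _ _

end PeriodicAveraging

lemma measurable_of_hasSum_of_eq_zero {α : Type*} [MeasurableSpace α] {s : Set α}
    (hs : MeasurableSet s) {u : ℕ → α → ℝ} (hu : ∀ l, Measurable (u l)) {f : α → ℝ}
    (hf : ∀ x ∈ s, HasSum (fun l => u l x) (f x)) (hf0 : ∀ x ∉ s, f x = 0) : Measurable f := by
  refine measurable_of_tendsto_metrizable
    (f := fun n x => ∑ l ∈ Finset.range n, s.indicator (u l) x)
    (fun _ => Finset.measurable_sum _ fun l _ => (hu l).indicator hs)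
    (tendsto_pi_nhds.2 fun x => ?_)
  by_cases hx : x ∈ s
  · simpa [hx] using (hf x hx).tendsto_sum_nat
  · simp [hx, hf0 x hx]

lemma Function.Periodic.intervalIntegral_zero_two_mul_of_even {g : ℝ → ℝ} {a : ℝ}
    (hg : Function.Periodic g (2 * a)) (hev : Function.Even g)
    (hgi : ∀ b c, IntervalIntegrable g volume b c) :
    ∫ u in 0..2 * a, g u = 2 * ∫ u in 0..a, g u := by
  have hneg : ∫ u in -a..0, g u = ∫ u in 0..a, g u := by
    simpa [hev _] using (intervalIntegral.integral_comp_neg (a := 0) (b := a) g).symm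
  rw [← zero_add (2 * a), hg.intervalIntegral_add_eq 0 (-a), show -a + 2 * a = a by ring,
    ← intervalIntegral.integral_add_adjacent_intervals (hgi (-a) 0) (hgi 0 a), hneg, two_mul]

lemma countable_setOf_cos_eq (z : ℝ) : {u | cos u = z}.Countable := by
  refine ((countable_range fun k : ℤ => arccos z + k * (2 * π)).union
    (countable_range fun k : ℤ => -arccos z + k * (2 * π))).mono fun u hu => ?_
  have hz : cos (arccos z) = cos u := by
    replace hu : cos u = z := hu
    rw [← hu, cos_arccos (neg_one_le_cos u) (cos_le_one u)]
  obtain ⟨k, hk | hk⟩ := cos_eq_cos_iff.1 hz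
  · exact Or.inl ⟨k, by linarith⟩
  · exact Or.inr ⟨k, by linarith⟩

noncomputable def cosLeIndicator (z : ℝ) : ℝ → ℝ := {u | cos u ≤ z}.indicator 1

section cosLeIndicator

variable (z : ℝ)

lemma measurable_cosLeIndicator : Measurable (cosLeIndicator z) :=
  measurable_const.indicator (measurableSet_le continuous_cos.measurable measurable_const)

lemma abs_cosLeIndicator_le_one (u : ℝ) : |cosLeIndicator z u| ≤ 1 := by
  unfold cosLeIndicator indicator
  split_ifs <;> simp

lemma periodic_cosLeIndicator : Function.Periodic (cosLeIndicator z) (2 * π) := by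
  intro u
  simp [cosLeIndicator, indicator]

lemma even_cosLeIndicator : Function.Even (cosLeIndicator z) := by
  intro u
  simp [cosLeIndicator, indicator]

lemma continuousAt_cosLeIndicator {u : ℝ} (hu : cos u ≠ z) :
    ContinuousAt (cosLeIndicator z) u := by
  rcases hu.lt_or_gt with h | h
  · refine continuousAt_const.congr (f := fun _ => 1) ?_
    filter_upwards [(isOpen_lt continuous_cos continuous_const).mem_nhds h] with v hv
    simp [cosLeIndicator, le_of_lt hv]
  · refine continuousAt_const.congr (f := fun _ => 0) ?_
    filter_upwards [(isOpen_lt continuous_const continuous_cos).mem_nhds h] with v hv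
    simp [cosLeIndicator, not_le.2 (show z < cos v from hv)]

lemma inv_two_pi_mul_integral_cosLeIndicator :
    (2 * π)⁻¹ * ∫ u in 0..2 * π, cosLeIndicator z u = π⁻¹ * ∫ u in 0..π, cosLeIndicator z u := by
  rw [(periodic_cosLeIndicator z).intervalIntegral_zero_two_mul_of_even (even_cosLeIndicator z)
    (intervalIntegrable_of_abs_le (measurable_cosLeIndicator z) (abs_cosLeIndicator_le_one z))]
  field_simp

lemma indicator_setOf_T_le_cos (k : ℕ) (F : ℝ → ℝ) (θ : ℝ) :
    {x | (Chebyshev.T ℝ k).eval x ≤ z}.indicator F (cos θ) =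
      cosLeIndicator z (k * θ) * F (cos θ) := by
  by_cases h : cos (k * θ) ≤ z <;> simp [cosLeIndicator, indicator, h]

end cosLeIndicator

lemma integral_Icc_neg_one_one_eq_integral_cos (F : ℝ → ℝ) :
    ∫ x in Icc (-1) 1, F x = ∫ θ in 0..π, F (cos θ) * sin θ := by
  rw [← bijOn_cos.image_eq, integral_image_eq_integral_abs_deriv_smul measurableSet_Icc
    (fun θ _ => (hasDerivAt_cos θ).hasDerivWithinAt) injOn_cos,
    intervalIntegral.integral_of_le pi_pos.le, integral_Icc_eq_integral_Ioc]
  refine setIntegral_congr_fun measurableSet_Ioc fun θ hθ => ?_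
  rw [abs_neg, abs_of_nonneg (sin_nonneg_of_nonneg_of_le_pi hθ.1.le hθ.2), smul_eq_mul, mul_comm]

lemma toReal_withDensity_apply_eq_integral_cos {F : ℝ → ℝ} (hFm : Measurable F)
    (hF0 : ∀ x, 0 ≤ F x) (hF : ∀ x ∉ Icc (-1 : ℝ) 1, F x = 0) {S : Set ℝ}
    (hS : MeasurableSet S) :
    ((volume.withDensity fun x => ENNReal.ofReal (F x)) S).toReal =
      ∫ θ in 0..π, S.indicator F (cos θ) * sin θ := by
  rw [withDensity_apply _ hS, ← integral_eq_lintegral_of_nonneg_ae (ae_of_all _ hF0)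
    hFm.aestronglyMeasurable, ← integral_indicator hS,
    ← setIntegral_eq_integral_of_forall_compl_eq_zero fun x hx => by simp [indicator, hF x hx],
    integral_Icc_neg_one_one_eq_integral_cos]

lemma toReal_withDensity_arcsineDensity_Iic (z : ℝ) :
    ((volume.withDensity arcsineDensity) (Iic z)).toReal =
      π⁻¹ * ∫ θ in 0..π, cosLeIndicator z θ := by
  set F := (Ioo (-1 : ℝ) 1).indicator fun x => 1 / (π * √(1 - x ^ 2))
  have hF : arcsineDensity = fun x => ENNReal.ofReal (F x) := by
    funext x
    by_cases hx : x ∈ Ioo (-1 : ℝ) 1 <;> simp [arcsineDensity, F, hx]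
  rw [hF, toReal_withDensity_apply_eq_integral_cos
    ((by fun_prop : Measurable fun x : ℝ => 1 / (π * √(1 - x ^ 2))).indicator measurableSet_Ioo)
    (fun x => indicator_nonneg (fun x _ => by positivity) x)
    (fun x hx => indicator_of_notMem (fun h => hx (Ioo_subset_Icc_self h)) _) measurableSet_Iic,
    ← intervalIntegral.integral_const_mul]
  refine intervalIntegral.integral_congr_ae ?_
  filter_upwards [Measure.ae_ne volume π] with θ hθπ hθmem
  obtain ⟨hθ0, hθ⟩ : 0 < θ ∧ θ ≤ π := by rwa [uIoc_of_le pi_pos.le] at hθmem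
  have hθ' : θ < π := lt_of_le_of_ne hθ hθπ
  have hsin : 0 < sin θ := sin_pos_of_pos_of_lt_pi hθ0 hθ'
  have hcos : cos θ ∈ Ioo (-1 : ℝ) 1 := by
    refine ⟨?_, ?_⟩
    · simpa using strictAntiOn_cos ⟨hθ0.le, hθ⟩ ⟨pi_pos.le, le_rfl⟩ hθ'
    · simpa using strictAntiOn_cos ⟨le_rfl, pi_pos.le⟩ ⟨hθ0.le, hθ⟩ hθ0
  by_cases h : cos θ ≤ z
  · simp [cosLeIndicator, indicator, h, hcos, ← sin_eq_sqrt_one_sub_cos_sq hθ0.le hθ]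
    field_simp
  · simp [cosLeIndicator, indicator, h]

/-- Main theorem: let `X` be a continuous random variable on `[-1,1]` whose density `f`
has an absolutely convergent Chebyshev series `f x = ∑_{l=0}^∞ μ_l T_l x`. Then as
`k → ∞`, `T_k X` converges in distribution to the random variable `Γ` with the arcsine
density `1/(π √(1-z²))` on `(-1,1)`: the cdf of `T_k X` converges pointwise to the cdf
of `Γ` (which is continuous everywhere). -/
theorem chebyshev_converges_to_arcsine
    {Ω : Type*} [MeasureSpace Ω] (ℙ : Measure Ω) [IsProbabilityMeasure ℙ]
    (X : Ω → ℝ) (hX : Measurable X)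
    (f : ℝ → ℝ) (hf_nonneg : ∀ x, 0 ≤ f x)
    (hf_supp : ∀ x, x ∉ Set.Icc (-1 : ℝ) 1 → f x = 0)
    (hlaw : Measure.map X ℙ = volume.withDensity (fun x => ENNReal.ofReal (f x)))
    (μ : ℕ → ℝ) (habs : Summable fun l => |μ l|)
    (hexp : ∀ x ∈ Set.Icc (-1 : ℝ) 1,
      HasSum (fun l : ℕ => μ l * (Polynomial.Chebyshev.T ℝ l).eval x) (f x)) :
    ∀ z : ℝ,
      Filter.Tendsto
        (fun k : ℕ =>
          (ℙ {ω | (Polynomial.Chebyshev.T ℝ k).eval (X ω) ≤ z}).toReal)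
        Filter.atTop
        (nhds (((volume.withDensity arcsineDensity) (Set.Iic z)).toReal)) := by
  intro z
  have hfm : Measurable f :=
    measurable_of_hasSum_of_eq_zero measurableSet_Icc (fun _ => by fun_prop) hexp hf_supp
  have hlaw_cos : ∀ S, MeasurableSet S →
      (ℙ (X ⁻¹' S)).toReal = ∫ θ in 0..π, S.indicator f (cos θ) * sin θ := fun S hS => by
    rw [← Measure.map_apply hX hS, hlaw,
      toReal_withDensity_apply_eq_integral_cos hfm hf_nonneg hf_supp hS]
  have hmass : ∫ θ in 0..π, f (cos θ) * sin θ = 1 := by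
    simpa using (hlaw_cos univ MeasurableSet.univ).symm
  have hcos_series : ∀ θ, HasSum (fun l => μ l * (cos (l * θ) * sin θ)) (f (cos θ) * sin θ) :=
    fun θ => by
      simpa [mul_assoc] using (hexp _ ⟨neg_one_le_cos θ, cos_le_one θ⟩).mul_right (sin θ)
  have hlim := (periodic_cosLeIndicator z).tendsto_integral_comp_mul_mul_of_hasSum
    (by positivity) (measurable_cosLeIndicator z) (abs_cosLeIndicator_le_one z)
    (countable_setOf_cos_eq z) (fun _ => continuousAt_cosLeIndicator z) habs
    (fun l => by fun_prop)
    (fun _ θ => abs_mul _ (sin θ) ▸ mul_le_one₀ (abs_cos_le_one _) (abs_nonneg _)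
      (abs_sin_le_one θ)) hcos_series 0 π
  rw [hmass, mul_one, inv_two_pi_mul_integral_cosLeIndicator] at hlim
  rw [toReal_withDensity_arcsineDensity_Iic]
  refine hlim.congr fun k => ?_
  have hk := hlaw_cos {x | (Chebyshev.T ℝ k).eval x ≤ z}
    (measurableSet_le (by fun_prop) measurable_const)
  simp_rw [indicator_setOf_T_le_cos, mul_assoc] at hk
  exact hk.symm
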